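/- arXiv:1904.08114 — 6 statements merged into one kernel-verified Lean document; each statement's English description precedes it below -/
import Mathlib

section
/- Let H be a finite connected graph on vertex set [k] with edge set E_H, and let τ ∈ (2,3). Define f : ℝ_{≥0}^k → ℝ by f(α) = (1-τ)·∑_{i∈[k]} α_i + ∑_{(i,j)∈E_H, α_i+α_j<1} (α_i+α_j-1). Then f attains its supremum over {α : ∀i, α_i ≥ 0}, and among the maximizers there exists one with α_i ∈ {0, 1/2, 1} for all i. -/
open scoped Classical

/-- Free-variation objective: `f(α) = (1-τ)·∑ α_i + ∑_{(i,j)∈E_H, α_i+α_j<1}(α_i+α_j-1)`,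
where the sum over edges is realized as a sum over ordered adjacent pairs divided by 2. -/
noncomputable def fobj {k : ℕ} (G : SimpleGraph (Fin k)) (τ : ℝ) (α : Fin k → ℝ) : ℝ :=
  (1 - τ) * (∑ i, α i) +
    (∑ p ∈ Finset.univ.filter
        (fun p : Fin k × Fin k => G.Adj p.1 p.2 ∧ α p.1 + α p.2 < 1),
      (α p.1 + α p.2 - 1)) / 2

namespace FVaux

open Finset

variable {k : ℕ}

noncomputable def ffun (G : SimpleGraph (Fin k)) (τ : ℝ) (α : Fin k → ℝ) : ℝ :=
  (1 - τ) * (∑ i, α i) +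
    (∑ p ∈ Finset.univ.filter (fun p : Fin k × Fin k => G.Adj p.1 p.2),
      min (0:ℝ) (α p.1 + α p.2 - 1)) / 2

lemma fobj_eq_ffun (G : SimpleGraph (Fin k)) (τ : ℝ) (α : Fin k → ℝ) :
    fobj G τ α = ffun G τ α := by
  unfold fobj ffun
  congr 1
  congr 1
  have h : Finset.univ.filter (fun p : Fin k × Fin k => G.Adj p.1 p.2 ∧ α p.1 + α p.2 < 1)
      = (Finset.univ.filter (fun p : Fin k × Fin k => G.Adj p.1 p.2)).filter
          (fun p => α p.1 + α p.2 < 1) := by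
    rw [Finset.filter_filter]
  rw [h, Finset.sum_filter]
  apply Finset.sum_congr rfl
  intro p _
  by_cases hlt : α p.1 + α p.2 < 1
  · rw [if_pos hlt, min_eq_right (by linarith)]
  · rw [if_neg hlt, min_eq_left (by push_neg at hlt; linarith)]

lemma ffun_cont (G : SimpleGraph (Fin k)) (τ : ℝ) : Continuous (ffun G τ) := by
  unfold ffun
  apply Continuous.add
  · exact continuous_const.mul (continuous_finset_sum _ fun i _ => continuous_apply i)
  · exact (continuous_finset_sum _ fun p _ =>
      continuous_const.min (((continuous_apply p.1).add (continuous_apply p.2)).sub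
        continuous_const)).div_const 2

lemma clamp_le (G : SimpleGraph (Fin k)) (τ : ℝ) (hτ : 1 < τ) (β : Fin k → ℝ)
    (hβ : ∀ i, 0 ≤ β i) : ffun G τ β ≤ ffun G τ (fun i => min (β i) 1) := by
  unfold ffun
  have hedge : (∑ p ∈ Finset.univ.filter (fun p : Fin k × Fin k => G.Adj p.1 p.2),
      min (0:ℝ) (min (β p.1) 1 + min (β p.2) 1 - 1))
      = ∑ p ∈ Finset.univ.filter (fun p : Fin k × Fin k => G.Adj p.1 p.2),
        min (0:ℝ) (β p.1 + β p.2 - 1) := by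
    apply Finset.sum_congr rfl
    intro p _
    have h1 := hβ p.1
    have h2 := hβ p.2
    simp only [min_def]
    split_ifs <;> linarith
  rw [hedge]
  gcongr ?_ + _
  apply mul_le_mul_of_nonpos_left _ (by linarith : (1:ℝ) - τ ≤ 0)
  exact Finset.sum_le_sum fun i _ => min_le_left _ _


noncomputable def frs (α : Fin k → ℝ) : Finset (Fin k) :=
  Finset.univ.filter (fun i => α i ∉ ({0, 1/2, 1} : Set ℝ))

noncomputable def edgS (G : SimpleGraph (Fin k)) (α : Fin k → ℝ) : Finset (Fin k × Fin k) :=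
  Finset.univ.filter (fun p : Fin k × Fin k => G.Adj p.1 p.2 ∧ α p.1 + α p.2 < 1)

noncomputable def mes (G : SimpleGraph (Fin k)) (α : Fin k → ℝ) : ℕ :=
  (frs α).card + (edgS G α).card

lemma lin (G : SimpleGraph (Fin k)) (τ : ℝ) (α e : Fin k → ℝ) (ε : ℝ) (hε : 0 ≤ ε)
    (htight : ∀ p : Fin k × Fin k, G.Adj p.1 p.2 → α p.1 + α p.2 = 1 → e p.1 + e p.2 = 0)
    (hbnd : ∀ p : Fin k × Fin k, G.Adj p.1 p.2 →
      (α p.1 + α p.2 - 1) * (e p.1 + e p.2) < 0 →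
      ε ≤ (1 - (α p.1 + α p.2)) / (e p.1 + e p.2)) :
    ffun G τ (fun i => α i + ε * e i) = ffun G τ α +
      ε * ((1 - τ) * (∑ i, e i) + (∑ p ∈ edgS G α, (e p.1 + e p.2)) / 2) := by
  have key : ∀ p ∈ Finset.univ.filter (fun p : Fin k × Fin k => G.Adj p.1 p.2),
      min (0:ℝ) ((α p.1 + ε * e p.1) + (α p.2 + ε * e p.2) - 1)
        = min (0:ℝ) (α p.1 + α p.2 - 1)
          + ε * (if α p.1 + α p.2 < 1 then e p.1 + e p.2 else 0) := by
    intro p hp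
    have hadj : G.Adj p.1 p.2 := by simpa using hp
    set s : ℝ := α p.1 + α p.2 with hs
    set E : ℝ := e p.1 + e p.2 with hE
    have hrw : (α p.1 + ε * e p.1) + (α p.2 + ε * e p.2) - 1 = s + ε * E - 1 := by
      rw [hs, hE]; ring
    rw [hrw]
    rcases lt_trichotomy s 1 with h | h | h
    · have : s + ε * E - 1 ≤ 0 := by
        rcases le_or_gt E 0 with hE0 | hE0
        · have h2 : ε * E ≤ 0 := mul_nonpos_of_nonneg_of_nonpos hε hE0
          linarith
        · have hb := hbnd p hadj (mul_neg_of_neg_of_pos (by linarith) hE0)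
          rw [le_div_iff₀ hE0] at hb
          linarith
      rw [if_pos h, min_eq_right this, min_eq_right (by linarith)]
      ring
    · have hE0 : E = 0 := htight p hadj h
      rw [if_neg (by simp [h])]
      rw [h, hE0]
      norm_num
    · have : 0 ≤ s + ε * E - 1 := by
        rcases le_or_gt 0 E with hE0 | hE0
        · have h2 : 0 ≤ ε * E := mul_nonneg hε hE0
          linarith
        · have hb := hbnd p hadj (mul_neg_of_pos_of_neg (by linarith) hE0)
          rw [le_div_iff_of_neg hE0] at hb
          linarith
      rw [if_neg (by linarith), min_eq_left this, min_eq_left (by linarith)]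
      ring
  have hsum : (∑ p ∈ Finset.univ.filter (fun p : Fin k × Fin k => G.Adj p.1 p.2),
        (if α p.1 + α p.2 < 1 then e p.1 + e p.2 else 0))
      = ∑ p ∈ edgS G α, (e p.1 + e p.2) := by
    simp only [edgS, ← Finset.filter_filter, Finset.sum_filter]
  unfold ffun
  rw [Finset.sum_congr rfl key]
  simp only [Finset.sum_add_distrib, ← Finset.mul_sum]
  rw [hsum]
  simp only [Finset.sum_add_distrib]
  ring


lemma descent (G : SimpleGraph (Fin k)) (τ : ℝ) (α : Fin k → ℝ)
    (hα0 : ∀ i, 0 ≤ α i) (hα1 : ∀ i, α i ≤ 1)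
    (hmax : ∀ β : Fin k → ℝ, (∀ i, 0 ≤ β i) → ffun G τ β ≤ ffun G τ α)
    (hfr : (frs α).Nonempty) :
    ∃ α' : Fin k → ℝ, (∀ i, 0 ≤ α' i) ∧ (∀ i, α' i ≤ 1) ∧
      (∀ β : Fin k → ℝ, (∀ i, 0 ≤ β i) → ffun G τ β ≤ ffun G τ α') ∧
      mes G α' < mes G α := by
  classical
  set d : Fin k → ℝ := fun i =>
    if α i ∈ ({0, 1/2, 1} : Set ℝ) then 0 else if α i < 1/2 then -1 else 1 with hd_def
  have hmemS : ∀ x : ℝ, x ∈ ({0, 1/2, 1} : Set ℝ) ↔ (x = 0 ∨ x = 1/2 ∨ x = 1) := by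
    intro x; simp [Set.mem_insert_iff]
  have hfrsg : ∀ (β : Fin k → ℝ) (i : Fin k),
      i ∈ frs β ↔ β i ∉ ({0, 1/2, 1} : Set ℝ) := by
    intro β i; simp [frs]
  have hd0 : ∀ i, α i ∈ ({0, 1/2, 1} : Set ℝ) → d i = 0 := by
    intro i h; simp only [hd_def]; rw [if_pos h]
  have hdB : ∀ i, α i ∉ ({0, 1/2, 1} : Set ℝ) → α i < 1/2 → d i = -1 := by
    intro i h h'; simp only [hd_def]; rw [if_neg h, if_pos h']
  have hdA : ∀ i, α i ∉ ({0, 1/2, 1} : Set ℝ) → ¬ (α i < 1/2) → d i = 1 := by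
    intro i h h'; simp only [hd_def]; rw [if_neg h, if_neg h']
  have hfrac : ∀ i, α i ∉ ({0, 1/2, 1} : Set ℝ) → 0 < α i ∧ α i < 1 ∧ α i ≠ 1/2 := by
    intro i h
    rw [hmemS] at h
    push_neg at h
    exact ⟨lt_of_le_of_ne (hα0 i) (Ne.symm h.1), lt_of_le_of_ne (hα1 i) h.2.2, h.2.1⟩
  have hdgt : ∀ i, α i ∉ ({0, 1/2, 1} : Set ℝ) → ¬ (α i < 1/2) → 1/2 < α i := by
    intro i h h'
    exact lt_of_le_of_ne (not_lt.mp h') (Ne.symm (hfrac i h).2.2)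
  have hdcases : ∀ i, (d i = 0 ∧ α i ∈ ({0, 1/2, 1} : Set ℝ)) ∨
      (d i = -1 ∧ α i ∉ ({0, 1/2, 1} : Set ℝ) ∧ α i < 1/2) ∨
      (d i = 1 ∧ α i ∉ ({0, 1/2, 1} : Set ℝ) ∧ 1/2 < α i) := by
    intro i
    by_cases h : α i ∈ ({0, 1/2, 1} : Set ℝ)
    · exact Or.inl ⟨hd0 i h, h⟩
    · by_cases h' : α i < 1/2
      · exact Or.inr (Or.inl ⟨hdB i h h', h, h'⟩)
      · exact Or.inr (Or.inr ⟨hdA i h h', h, hdgt i h h'⟩)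
  have K1 : ∀ i j : Fin k, α i + α j = 1 → d i + d j = 0 := by
    intro i j hij
    by_cases hi : α i ∈ ({0, 1/2, 1} : Set ℝ)
    · have hj : α j ∈ ({0, 1/2, 1} : Set ℝ) := by
        rw [hmemS] at hi ⊢
        rcases hi with h | h | h
        · right; right; linarith
        · right; left; linarith
        · left; linarith
      rw [hd0 i hi, hd0 j hj]; ring
    · have hj : α j ∉ ({0, 1/2, 1} : Set ℝ) := by
        intro hj
        apply hi
        rw [hmemS] at hj ⊢
        rcases hj with h | h | h
        · right; right; linarith
        · right; left; linarith
        · left; linarith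
      by_cases hlt : α i < 1/2
      · have hj2 : ¬ (α j < 1/2) := by
          have := (hfrac i hi).1; intro h; linarith
        rw [hdB i hi hlt, hdA j hj hj2]; ring
      · have hgt := hdgt i hi hlt
        have hj2 : α j < 1/2 := by linarith
        rw [hdA i hi hlt, hdB j hj hj2]; ring
  -- event times
  set Tc : Finset ℝ := (frs α).image (fun i => if α i < 1/2 then α i else 1 - α i) with hTc
  set Te : Finset ℝ := (Finset.univ.filter (fun p : Fin k × Fin k =>
      G.Adj p.1 p.2 ∧ (α p.1 + α p.2 - 1) * (d p.1 + d p.2) < 0)).image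
      (fun p => (1 - (α p.1 + α p.2)) / (d p.1 + d p.2)) with hTe
  set T : Finset ℝ := Tc ∪ Te with hT
  have hTne : T.Nonempty := by
    obtain ⟨i0, hi0⟩ := hfr
    exact ⟨_, Finset.mem_union_left _ (Finset.mem_image_of_mem _ hi0)⟩
  set ε₁ : ℝ := T.min' hTne with hε₁
  have hposdiv : ∀ s X : ℝ, (s - 1) * X < 0 → 0 < (1 - s) / X := by
    intro s X h
    rcases lt_trichotomy X 0 with hX | hX | hX
    · have hs : 1 - s < 0 := by nlinarith
      exact div_pos_of_neg_of_neg hs hX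
    · rw [hX] at h; simp at h
    · have hs : 0 < 1 - s := by nlinarith
      exact div_pos hs hX
  have hTpos : ∀ t ∈ T, 0 < t := by
    intro t ht
    rw [hT, Finset.mem_union] at ht
    rcases ht with ht | ht
    · rw [hTc, Finset.mem_image] at ht
      obtain ⟨i, hi, rfl⟩ := ht
      rw [hfrsg] at hi
      obtain ⟨h0, h1, _⟩ := hfrac i hi
      by_cases h : α i < 1/2
      · rw [if_pos h]; exact h0
      · rw [if_neg h]; linarith
    · rw [hTe, Finset.mem_image] at ht
      obtain ⟨p, hp, rfl⟩ := ht
      simp only [Finset.mem_filter] at hp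
      exact hposdiv _ _ hp.2.2
  have hε₁pos : 0 < ε₁ := hTpos _ (T.min'_mem hTne)
  have hbc : ∀ i, α i ∉ ({0, 1/2, 1} : Set ℝ) →
      ε₁ ≤ (if α i < 1/2 then α i else 1 - α i) := by
    intro i hi
    rw [hε₁]
    apply Finset.min'_le
    rw [hT, Finset.mem_union]
    left
    rw [hTc, Finset.mem_image]
    exact ⟨i, (hfrsg α i).mpr hi, rfl⟩
  have hbe : ∀ p : Fin k × Fin k, G.Adj p.1 p.2 →
      (α p.1 + α p.2 - 1) * (d p.1 + d p.2) < 0 →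
      ε₁ ≤ (1 - (α p.1 + α p.2)) / (d p.1 + d p.2) := by
    intro p hadj hneg
    rw [hε₁]
    apply Finset.min'_le
    rw [hT, Finset.mem_union]
    right
    rw [hTe, Finset.mem_image]
    refine ⟨p, ?_, rfl⟩
    simp only [Finset.mem_filter]
    exact ⟨Finset.mem_univ _, hadj, hneg⟩
  have htight : ∀ p : Fin k × Fin k, G.Adj p.1 p.2 → α p.1 + α p.2 = 1 →
      d p.1 + d p.2 = 0 := fun p _ h => K1 p.1 p.2 h
  have hfwd := lin G τ α d ε₁ hε₁pos.le htight hbe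
  set α' : Fin k → ℝ := fun i => α i + ε₁ * d i with hα'd
  set c : ℝ := (1 - τ) * (∑ i, d i) + (∑ p ∈ edgS G α, (d p.1 + d p.2)) / 2 with hc
  -- hfwd : ffun G τ α' = ffun G τ α + ε₁ * c
  have hα'i : ∀ i, α' i = α i + ε₁ * d i := fun i => rfl
  have hcoord : ∀ i, (α' i = α i ∧ d i = 0) ∨
      (d i = -1 ∧ α' i = α i - ε₁ ∧ ε₁ ≤ α i ∧ α i < 1/2 ∧ α i ∉ ({0,1/2,1} : Set ℝ)) ∨
      (d i = 1 ∧ α' i = α i + ε₁ ∧ ε₁ ≤ 1 - α i ∧ 1/2 < α i ∧ α i ∉ ({0,1/2,1} : Set ℝ)) := by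
    intro i
    rcases hdcases i with ⟨h, hm⟩ | ⟨h, hm, hlt⟩ | ⟨h, hm, hgt⟩
    · exact Or.inl ⟨by rw [hα'i, h]; ring, h⟩
    · refine Or.inr (Or.inl ⟨h, by rw [hα'i, h]; ring, ?_, hlt, hm⟩)
      have := hbc i hm; rw [if_pos hlt] at this; exact this
    · refine Or.inr (Or.inr ⟨h, by rw [hα'i, h]; ring, ?_, hgt, hm⟩)
      have := hbc i hm
      rw [if_neg (by linarith : ¬ α i < 1/2)] at this
      exact this
  have hα'0 : ∀ i, 0 ≤ α' i := by
    intro i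
    rcases hcoord i with ⟨h, _⟩ | ⟨_, h, h2, _, _⟩ | ⟨_, h, _, _, _⟩
    · rw [h]; exact hα0 i
    · rw [h]; linarith
    · rw [h]; have := hα0 i; linarith
  have hα'1 : ∀ i, α' i ≤ 1 := by
    intro i
    rcases hcoord i with ⟨h, _⟩ | ⟨_, h, _, _, _⟩ | ⟨_, h, h2, _, _⟩
    · rw [h]; exact hα1 i
    · rw [h]; have := hα1 i; linarith
    · rw [h]; linarith
  have hcle : c ≤ 0 := by
    have h1 := hmax α' hα'0
    rw [hfwd] at h1
    have h2 : ε₁ * c ≤ ε₁ * 0 := by linarith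
    exact le_of_mul_le_mul_left h2 hε₁pos
  -- backward step
  set e : Fin k → ℝ := fun i => -d i with he_def
  have hei : ∀ i, e i = -d i := fun i => rfl
  set Te' : Finset ℝ := (Finset.univ.filter (fun p : Fin k × Fin k =>
      G.Adj p.1 p.2 ∧ (α p.1 + α p.2 - 1) * (e p.1 + e p.2) < 0)).image
      (fun p => (1 - (α p.1 + α p.2)) / (e p.1 + e p.2)) with hTe'
  set T' : Finset ℝ := insert (1/2 : ℝ) Te' with hT'
  have hT'ne : T'.Nonempty := Finset.insert_nonempty _ _
  set ε₂ : ℝ := T'.min' hT'ne with hε₂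
  have hT'pos : ∀ t ∈ T', 0 < t := by
    intro t ht
    rw [hT', Finset.mem_insert] at ht
    rcases ht with rfl | ht
    · norm_num
    · rw [hTe', Finset.mem_image] at ht
      obtain ⟨p, hp, rfl⟩ := ht
      simp only [Finset.mem_filter] at hp
      exact hposdiv _ _ hp.2.2
  have hε₂pos : 0 < ε₂ := hT'pos _ (T'.min'_mem hT'ne)
  have hε₂half : ε₂ ≤ 1/2 := by
    rw [hε₂]
    exact Finset.min'_le _ _ (by rw [hT']; exact Finset.mem_insert_self _ _)
  have htight' : ∀ p : Fin k × Fin k, G.Adj p.1 p.2 → α p.1 + α p.2 = 1 →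
      e p.1 + e p.2 = 0 := by
    intro p hadj h
    have := K1 p.1 p.2 h
    rw [hei, hei]; linarith
  have hbe' : ∀ p : Fin k × Fin k, G.Adj p.1 p.2 →
      (α p.1 + α p.2 - 1) * (e p.1 + e p.2) < 0 →
      ε₂ ≤ (1 - (α p.1 + α p.2)) / (e p.1 + e p.2) := by
    intro p hadj hneg
    rw [hε₂]
    apply Finset.min'_le
    rw [hT']
    apply Finset.mem_insert_of_mem
    rw [hTe', Finset.mem_image]
    refine ⟨p, ?_, rfl⟩
    simp only [Finset.mem_filter]
    exact ⟨Finset.mem_univ _, hadj, hneg⟩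
  have hbwd := lin G τ α e ε₂ hε₂pos.le htight' hbe'
  have hsum_e : (∑ i, e i) = -(∑ i, d i) := by
    rw [← Finset.sum_neg_distrib]
  have hsum_e2 : (∑ p ∈ edgS G α, (e p.1 + e p.2))
      = -(∑ p ∈ edgS G α, (d p.1 + d p.2)) := by
    rw [← Finset.sum_neg_distrib]
    refine Finset.sum_congr rfl fun p _ => ?_
    rw [hei, hei]; ring
  have hbwd2 : ffun G τ (fun i => α i + ε₂ * e i) = ffun G τ α - ε₂ * c := by
    rw [hbwd, hsum_e, hsum_e2, hc]; ring
  have hcge : 0 ≤ c := by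
    have hβ0 : ∀ i, 0 ≤ α i + ε₂ * e i := by
      intro i
      rw [hei]
      rcases hdcases i with ⟨h, _⟩ | ⟨h, _, _⟩ | ⟨h, _, hgt⟩
      · rw [h]; simpa using hα0 i
      · rw [h]; have := hα0 i; nlinarith
      · rw [h]; nlinarith
    have h1 := hmax _ hβ0
    rw [hbwd2] at h1
    have h2 : ε₂ * 0 ≤ ε₂ * c := by linarith
    exact le_of_mul_le_mul_left h2 hε₂pos
  have hc0 : c = 0 := le_antisymm hcle hcge
  have hval : ffun G τ α' = ffun G τ α := by rw [hfwd, hc0]; ring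
  have hmax' : ∀ β : Fin k → ℝ, (∀ i, 0 ≤ β i) → ffun G τ β ≤ ffun G τ α' := by
    intro β hβ; rw [hval]; exact hmax β hβ
  -- subsets
  have hfrs_sub : frs α' ⊆ frs α := by
    intro i hi
    rw [hfrsg] at hi ⊢
    intro hmem
    exact hi (by rw [hα'i i, hd0 i hmem]; simpa using hmem)
  have hs'eq : ∀ p : Fin k × Fin k,
      α' p.1 + α' p.2 = (α p.1 + α p.2) + ε₁ * (d p.1 + d p.2) := by
    intro p; rw [hα'i, hα'i]; ring
  have hedg_sub : edgS G α' ⊆ edgS G α := by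
    intro p hp
    simp only [edgS, Finset.mem_filter, Finset.mem_univ, true_and] at hp ⊢
    refine ⟨hp.1, ?_⟩
    by_contra hge
    push_neg at hge
    have hs' := hs'eq p
    have hlt := hp.2
    rcases eq_or_lt_of_le hge with heq1 | hgt1
    · have hD := K1 p.1 p.2 heq1.symm
      rw [hD, ← heq1] at hs'
      rw [hs'] at hlt
      norm_num at hlt
    · rcases le_or_gt 0 (d p.1 + d p.2) with hD | hD
      · have h0 : 0 ≤ ε₁ * (d p.1 + d p.2) := mul_nonneg hε₁pos.le hD
        rw [hs'] at hlt; linarith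
      · have hb := hbe p hp.1 (mul_neg_of_pos_of_neg (by linarith) hD)
        rw [le_div_iff_of_neg hD] at hb
        rw [hs'] at hlt; linarith
  -- strict decrease
  refine ⟨α', hα'0, hα'1, hmax', ?_⟩
  have hfrs_drop : ∀ i₀ : Fin k, i₀ ∈ frs α → i₀ ∉ frs α' → mes G α' < mes G α := by
    intro i₀ h1 h2
    have hss : frs α' ⊂ frs α := (Finset.ssubset_iff_of_subset hfrs_sub).mpr ⟨i₀, h1, h2⟩
    exact add_lt_add_of_lt_of_le (Finset.card_lt_card hss) (Finset.card_le_card hedg_sub)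
  have hedg_drop : ∀ p₀ : Fin k × Fin k, p₀ ∈ edgS G α → p₀ ∉ edgS G α' →
      mes G α' < mes G α := by
    intro p₀ h1 h2
    have hss : edgS G α' ⊂ edgS G α := (Finset.ssubset_iff_of_subset hedg_sub).mpr ⟨p₀, h1, h2⟩
    exact add_lt_add_of_le_of_lt (Finset.card_le_card hfrs_sub) (Finset.card_lt_card hss)
  have hmem_min : ε₁ ∈ T := by rw [hε₁]; exact T.min'_mem hTne
  rw [hT, Finset.mem_union] at hmem_min
  rcases hmem_min with hm | hm
  · -- coordinate event
    rw [hTc, Finset.mem_image] at hm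
    obtain ⟨i, hi, heq⟩ := hm
    rw [hfrsg] at hi
    apply hfrs_drop i ((hfrsg α i).mpr hi)
    by_cases h : α i < 1/2
    · rw [if_pos h] at heq
      have hz : α' i = 0 := by rw [hα'i i, hdB i hi h, ← heq]; ring
      simp [hfrsg, hz]
    · rw [if_neg h] at heq
      have hz : α' i = 1 := by rw [hα'i i, hdA i hi h, ← heq]; ring
      simp [hfrsg, hz]
  · -- edge event
    rw [hTe, Finset.mem_image] at hm
    obtain ⟨p, hp, heq⟩ := hm
    simp only [Finset.mem_filter, Finset.mem_univ, true_and] at hp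
    obtain ⟨hadj, hneg⟩ := hp
    have hDne : d p.1 + d p.2 ≠ 0 := by
      intro h; rw [h] at hneg; simp at hneg
    rcases lt_or_gt_of_ne hDne with hD | hD
    · -- D < 0, so s > 1 : some coordinate hits 0
      have hs1 : 1 < α p.1 + α p.2 := by
        by_contra hle; push_neg at hle; nlinarith
      rcases hdcases p.1 with ⟨h1, hm1⟩ | ⟨h1, hm1, hlt1⟩ | ⟨h1, hm1, hgt1⟩ <;>
        rcases hdcases p.2 with ⟨h2, hm2⟩ | ⟨h2, hm2, hlt2⟩ | ⟨h2, hm2, hgt2⟩ <;>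
        first
          | (rw [h1, h2] at hD; norm_num at hD; done)
          | skip
      · -- d p.1 = 0, d p.2 = -1
        have hα1eq : α p.1 = 1 := by
          rw [hmemS] at hm1
          rcases hm1 with h | h | h
          · exfalso; rw [h] at hs1; linarith
          · exfalso; rw [h] at hs1; linarith
          · exact h
        rw [h1, h2, hα1eq] at heq
        have hε₁eq : ε₁ = α p.2 := by rw [← heq]; ring
        have hz : α' p.2 = 0 := by rw [hα'i p.2, h2, hε₁eq]; ring
        exact hfrs_drop p.2 ((hfrsg α p.2).mpr hm2) (by simp [hfrsg, hz])
      · -- d p.1 = -1, d p.2 = 0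
        have hα2eq : α p.2 = 1 := by
          rw [hmemS] at hm2
          rcases hm2 with h | h | h
          · exfalso; rw [h] at hs1; linarith
          · exfalso; rw [h] at hs1; linarith
          · exact h
        rw [h1, h2, hα2eq] at heq
        have hε₁eq : ε₁ = α p.1 := by rw [← heq]; ring
        have hz : α' p.1 = 0 := by rw [hα'i p.1, h1, hε₁eq]; ring
        exact hfrs_drop p.1 ((hfrsg α p.1).mpr hm1) (by simp [hfrsg, hz])
      · -- d p.1 = -1, d p.2 = -1 : impossible since both < 1/2
        exfalso; linarith
    · -- D > 0, so s < 1 : edge leaves edgS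
      have hs1 : α p.1 + α p.2 < 1 := by
        by_contra hle; push_neg at hle; nlinarith
      apply hedg_drop p
      · simp only [edgS, Finset.mem_filter, Finset.mem_univ, true_and]
        exact ⟨hadj, hs1⟩
      · simp only [edgS, Finset.mem_filter, Finset.mem_univ, true_and, not_and, not_lt]
        intro _
        have hs' := hs'eq p
        rw [← heq, div_mul_cancel₀ _ hDne] at hs'
        linarith


lemma exists_halfint (G : SimpleGraph (Fin k)) (τ : ℝ) :
    ∀ n : ℕ, ∀ α : Fin k → ℝ, mes G α ≤ n → (∀ i, 0 ≤ α i) → (∀ i, α i ≤ 1) →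
    (∀ β : Fin k → ℝ, (∀ i, 0 ≤ β i) → ffun G τ β ≤ ffun G τ α) →
    ∃ αs : Fin k → ℝ, (∀ i, αs i ∈ ({0, 1/2, 1} : Set ℝ)) ∧ (∀ i, 0 ≤ αs i) ∧
      ∀ β : Fin k → ℝ, (∀ i, 0 ≤ β i) → ffun G τ β ≤ ffun G τ αs := by
  intro n
  induction n with
  | zero =>
    intro α hn h0 h1 hm
    refine ⟨α, ?_, h0, hm⟩
    intro i
    by_contra hi
    have hifr : i ∈ frs α := by
      simp only [frs, Finset.mem_filter, Finset.mem_univ, true_and]; exact hi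
    have : 0 < (frs α).card := Finset.card_pos.mpr ⟨i, hifr⟩
    have : 1 ≤ mes G α := by unfold mes; omega
    omega
  | succ n ih =>
    intro α hn h0 h1 hm
    by_cases hfr : (frs α).Nonempty
    · obtain ⟨α', h0', h1', hm', hlt⟩ := descent G τ α h0 h1 hm hfr
      exact ih α' (by omega) h0' h1' hm'
    · refine ⟨α, ?_, h0, hm⟩
      intro i
      by_contra hi
      exact hfr ⟨i, by simp only [frs, Finset.mem_filter, Finset.mem_univ, true_and]; exact hi⟩

end FVaux


theorem free_variation_maximizer_half_integer
    (k : ℕ) (hk : 1 ≤ k) (G : SimpleGraph (Fin k)) (hG : G.Connected)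
    (τ : ℝ) (hτ2 : 2 < τ) (hτ3 : τ < 3) :
    ∃ αstar : Fin k → ℝ,
      (∀ i, αstar i ∈ ({0, 1/2, 1} : Set ℝ)) ∧
      (∀ i, 0 ≤ αstar i) ∧
      ∀ α : Fin k → ℝ, (∀ i, 0 ≤ α i) → fobj G τ α ≤ fobj G τ αstar := by
  classical
  have hle : (0 : Fin k → ℝ) ≤ 1 := fun i => zero_le_one
  obtain ⟨α₀, hα₀mem, hmax₀⟩ :=
    (isCompact_Icc (a := (0 : Fin k → ℝ)) (b := 1)).exists_isMaxOn
      (Set.nonempty_Icc.mpr hle) (FVaux.ffun_cont G τ).continuousOn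
  have h0 : ∀ i, 0 ≤ α₀ i := fun i => hα₀mem.1 i
  have h1 : ∀ i, α₀ i ≤ 1 := fun i => hα₀mem.2 i
  have hglob : ∀ β : Fin k → ℝ, (∀ i, 0 ≤ β i) →
      FVaux.ffun G τ β ≤ FVaux.ffun G τ α₀ := by
    intro β hβ
    have hcl := FVaux.clamp_le G τ (by linarith) β hβ
    have h2 : (fun i => min (β i) 1) ∈ Set.Icc (0 : Fin k → ℝ) 1 := by
      constructor
      · intro i; exact le_min (hβ i) zero_le_one
      · intro i; exact min_le_right _ _
    exact hcl.trans (hmax₀ h2)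
  obtain ⟨αs, hmem, hpos, hms⟩ :=
    FVaux.exists_halfint G τ (FVaux.mes G α₀) α₀ le_rfl h0 h1 hglob
  refine ⟨αs, hmem, hpos, ?_⟩
  intro α hα
  rw [FVaux.fobj_eq_ffun, FVaux.fobj_eq_ffun]
  exact hms α hα
end

section
/- Let H be a finite connected graph on [k] and τ ∈ (2,3). Define f(α) = (1-τ)·∑_i α_i + ∑_{(i,j)∈E_H, α_i+α_j<1}(α_i+α_j-1) on the domain {α : 0 ≤ α_i for all i}. If f has a unique maximizer α*, then α*_i ∈ {0, 1/2, 1} for every i. -/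
open scoped Classical

/-!
`f` is piecewise linear: its active edges (those with `α_i + α_j < 1`) only change across the
hyperplanes `α_i + α_j = 1`. If `α*` has a coordinate `a ∉ {0, 1/2, 1}`, raise every coordinate
equal to `a` and lower every coordinate equal to `1 - a`. This keeps each tight edge tight and
leaves zero coordinates alone, so on a small segment through `α*` in that direction `f` is linear
and the segment stays in the orthant. A linear function with an interior maximum on a segment is
constant there, so `α*` is not the only maximizer.
-/

open Filter Topology

section Direction

variable {ι : Type*}

lemma eventually_lt_iff_of_ne {X : Type*} [TopologicalSpace X] {g : X → ℝ} {x : X} {c : ℝ}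
    (hg : ContinuousAt g x) (hne : g x ≠ c) : ∀ᶠ y in 𝓝 x, (g y < c ↔ g x < c) := by
  rcases hne.lt_or_gt with hlt | hgt
  · filter_upwards [hg.eventually_lt continuousAt_const hlt] with y hy
    simp only [hy, hlt]
  · filter_upwards [continuousAt_const.eventually_lt hg hgt] with y hy
    simp only [hy.not_gt, hgt.not_gt]

lemma eventually_nonneg_add_smul [Finite ι] {α d : ι → ℝ} (hnn : ∀ i, 0 ≤ α i)
    (hzero : ∀ i, α i = 0 → d i = 0) : ∀ᶠ t in 𝓝 (0 : ℝ), ∀ i, 0 ≤ (α + t • d) i := by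
  refine eventually_all.2 fun i => ?_
  rcases (hnn i).eq_or_lt with h0 | hpos
  · refine Eventually.of_forall fun t => ?_
    simp [← h0, hzero i h0.symm]
  · have hcont : ContinuousAt (fun t : ℝ => α i + t * d i) 0 := by fun_prop
    filter_upwards [continuousAt_const.eventually_lt hcont (by simpa using hpos)] with t ht
    simpa using ht.le

noncomputable def levelDirection (α : ι → ℝ) (a : ℝ) (i : ι) : ℝ :=
  if α i = a then 1 else if α i = 1 - a then -1 else 0

lemma levelDirection_self (α : ι → ℝ) (i : ι) : levelDirection α (α i) i = 1 :=
  if_pos rfl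

lemma levelDirection_eq_zero {α : ι → ℝ} {a : ℝ} {i : ι} (ha : α i ≠ a) (ha' : α i ≠ 1 - a) :
    levelDirection α a i = 0 := by
  simp only [levelDirection, if_neg ha, if_neg ha']

lemma levelDirection_add_eq_zero {α : ι → ℝ} {a : ℝ} (ha : a ≠ 1 / 2) {i j : ι}
    (hij : α i + α j = 1) : levelDirection α a i + levelDirection α a j = 0 := by
  have hj : α j = 1 - α i := by linarith
  have hne : 1 - a ≠ a := fun h => ha (by linarith)
  unfold levelDirection
  by_cases hi : α i = a
  · simp [hi, hj, hne]
  by_cases hi' : α i = 1 - a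
  · simp [hi', hj, hne]
  have hj₁ : α j ≠ a := fun h => hi' (by linarith)
  have hj₂ : α j ≠ 1 - a := fun h => hi (by linarith)
  simp [hi, hi', hj₁, hj₂]

end Direction

section Objective

variable {k : ℕ} (G : SimpleGraph (Fin k)) (τ : ℝ)

noncomputable def activePairs (α : Fin k → ℝ) : Finset (Fin k × Fin k) :=
  Finset.univ.filter (fun p : Fin k × Fin k => G.Adj p.1 p.2 ∧ α p.1 + α p.2 < 1)

noncomputable def fobjSlope (α d : Fin k → ℝ) : ℝ :=
  (1 - τ) * (∑ i, d i) + (∑ p ∈ activePairs G α, (d p.1 + d p.2)) / 2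

lemma fobj_eq_activePairs (α : Fin k → ℝ) :
    fobj G τ α = (1 - τ) * (∑ i, α i) + (∑ p ∈ activePairs G α, (α p.1 + α p.2 - 1)) / 2 :=
  rfl

variable {G τ}

lemma fobj_add_smul {α d : Fin k → ℝ} {t : ℝ} (h : activePairs G (α + t • d) = activePairs G α) :
    fobj G τ (α + t • d) = fobj G τ α + t * fobjSlope G τ α d := by
  have hpair : ∀ p : Fin k × Fin k, (α + t • d) p.1 + (α + t • d) p.2 - 1
      = (α p.1 + α p.2 - 1) + t * (d p.1 + d p.2) := fun p => by
    simp only [Pi.add_apply, Pi.smul_apply, smul_eq_mul]; ring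
  rw [fobj_eq_activePairs, fobj_eq_activePairs, h, Finset.sum_congr rfl fun p _ => hpair p,
    Finset.sum_add_distrib, ← Finset.mul_sum]
  simp only [fobjSlope, Pi.add_apply, Pi.smul_apply, smul_eq_mul, Finset.sum_add_distrib,
    ← Finset.mul_sum]
  ring

lemma eventually_activePairs_add_smul {α d : Fin k → ℝ}
    (htight : ∀ i j, G.Adj i j → α i + α j = 1 → d i + d j = 0) :
    ∀ᶠ t in 𝓝 (0 : ℝ), activePairs G (α + t • d) = activePairs G α := by
  suffices h : ∀ᶠ t in 𝓝 (0 : ℝ), ∀ p : Fin k × Fin k, G.Adj p.1 p.2 →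
      ((α + t • d) p.1 + (α + t • d) p.2 < 1 ↔ α p.1 + α p.2 < 1) by
    filter_upwards [h] with t ht
    ext p
    simp only [activePairs, Finset.mem_filter, Finset.mem_univ, true_and]
    exact and_congr_right (ht p)
  refine eventually_all.2 fun p => ?_
  by_cases hp : α p.1 + α p.2 = 1
  · refine Eventually.of_forall fun t hadj => ?_
    have hshift : t * d p.1 + t * d p.2 = 0 := by rw [← mul_add, htight p.1 p.2 hadj hp, mul_zero]
    simp only [Pi.add_apply, Pi.smul_apply, smul_eq_mul]
    constructor <;> intro <;> linarith
  · have hcont : ContinuousAt (fun t : ℝ => (α + t • d) p.1 + (α + t • d) p.2) 0 := by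
      simp only [Pi.add_apply, Pi.smul_apply, smul_eq_mul]; fun_prop
    filter_upwards [eventually_lt_iff_of_ne hcont (by simpa using hp)] with t ht _
    simpa using ht

theorem exists_maximizer_add_smul {α d : Fin k → ℝ} (hnn : ∀ i, 0 ≤ α i)
    (hmax : ∀ β : Fin k → ℝ, (∀ i, 0 ≤ β i) → fobj G τ β ≤ fobj G τ α)
    (hzero : ∀ i, α i = 0 → d i = 0)
    (htight : ∀ i j, G.Adj i j → α i + α j = 1 → d i + d j = 0) :
    ∃ t : ℝ, t ≠ 0 ∧ (∀ i, 0 ≤ (α + t • d) i) ∧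
      ∀ β : Fin k → ℝ, (∀ i, 0 ≤ β i) → fobj G τ β ≤ fobj G τ (α + t • d) := by
  obtain ⟨ε, hε, hgood⟩ := Metric.eventually_nhds_iff.1
    ((eventually_nonneg_add_smul hnn hzero).and (eventually_activePairs_add_smul htight))
  have hsmall : ∀ t : ℝ, |t| = ε / 2 → dist t 0 < ε := fun t ht => by
    rw [Real.dist_0_eq_abs, ht]; linarith
  obtain ⟨hnn_pos, hact_pos⟩ := hgood (hsmall (ε / 2) (abs_of_pos (by positivity)))
  obtain ⟨hnn_neg, hact_neg⟩ :=
    hgood (hsmall (-(ε / 2)) (by rw [abs_neg, abs_of_pos (by positivity)]))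
  have hslope : fobjSlope G τ α d = 0 := by
    have h_pos := fobj_add_smul (τ := τ) hact_pos ▸ hmax _ hnn_pos
    have h_neg := fobj_add_smul (τ := τ) hact_neg ▸ hmax _ hnn_neg
    have : 0 < ε / 2 := by positivity
    nlinarith
  refine ⟨ε / 2, by positivity, hnn_pos, fun β hβ => ?_⟩
  rw [fobj_add_smul hact_pos, hslope, mul_zero, add_zero]
  exact hmax β hβ

theorem eq_zero_of_unique_maximizer {α d : Fin k → ℝ} (hnn : ∀ i, 0 ≤ α i)
    (hmax : ∀ β : Fin k → ℝ, (∀ i, 0 ≤ β i) → fobj G τ β ≤ fobj G τ α)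
    (huniq : ∀ β : Fin k → ℝ, (∀ i, 0 ≤ β i) →
      (∀ γ : Fin k → ℝ, (∀ i, 0 ≤ γ i) → fobj G τ γ ≤ fobj G τ β) → β = α)
    (hzero : ∀ i, α i = 0 → d i = 0)
    (htight : ∀ i j, G.Adj i j → α i + α j = 1 → d i + d j = 0) :
    d = 0 := by
  obtain ⟨t, ht, hnn', hmax'⟩ := exists_maximizer_add_smul hnn hmax hzero htight
  have h : α + t • d = α + 0 := by rw [add_zero]; exact huniq _ hnn' hmax'
  exact (smul_eq_zero.1 (add_left_cancel h)).resolve_left ht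

end Objective

theorem unique_maximizer_half_integer_general
    (k : ℕ) (G : SimpleGraph (Fin k))
    (τ : ℝ)
    (αstar : Fin k → ℝ) (hnn : ∀ i, 0 ≤ αstar i)
    (hmax : ∀ α : Fin k → ℝ, (∀ i, 0 ≤ α i) → fobj G τ α ≤ fobj G τ αstar)
    (huniq : ∀ α : Fin k → ℝ, (∀ i, 0 ≤ α i) →
      (∀ β : Fin k → ℝ, (∀ i, 0 ≤ β i) → fobj G τ β ≤ fobj G τ α) → α = αstar) :
    ∀ i, αstar i ∈ ({0, 1/2, 1} : Set ℝ) := by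
  intro i₀
  by_contra hmem
  simp only [Set.mem_insert_iff, Set.mem_singleton_iff, not_or] at hmem
  obtain ⟨ha₀, ha_half, ha₁⟩ := hmem
  have hzero : ∀ i, αstar i = 0 → levelDirection αstar (αstar i₀) i = 0 := fun i hi =>
    levelDirection_eq_zero (by rw [hi]; exact Ne.symm ha₀)
      (by rw [hi]; intro h; exact ha₁ (by linarith))
  have hd := eq_zero_of_unique_maximizer hnn hmax huniq hzero
    (fun i j _ hij => levelDirection_add_eq_zero ha_half hij)
  simpa [levelDirection_self] using congrFun hd i₀

theorem unique_maximizer_half_integer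
    (k : ℕ) (hk : 1 ≤ k) (G : SimpleGraph (Fin k)) (hG : G.Connected)
    (τ : ℝ) (hτ2 : 2 < τ) (hτ3 : τ < 3)
    (αstar : Fin k → ℝ) (hnn : ∀ i, 0 ≤ αstar i)
    (hmax : ∀ α : Fin k → ℝ, (∀ i, 0 ≤ α i) → fobj G τ α ≤ fobj G τ αstar)
    (huniq : ∀ α : Fin k → ℝ, (∀ i, 0 ≤ α i) →
      (∀ β : Fin k → ℝ, (∀ i, 0 ≤ β i) → fobj G τ β ≤ fobj G τ α) → α = αstar) :
    ∀ i, αstar i ∈ ({0, 1/2, 1} : Set ℝ) :=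
  unique_maximizer_half_integer_general k G τ αstar hnn hmax huniq
end

section
/- Let H be a graph, τ ∈ (2,3), and let (S_1,S_2,S_3) be a partition of V(H) maximizing |S_1| - |S_2| - (2E_{S_1} + E_{S_1,S_3})/(τ-1), where additionally S_2 = ∅. Then every vertex v ∈ S_1 satisfies d_{v,S_1} + d_{v,S_3} ≤ 1, where d_{v,S_i} is the number of neighbors of v in S_i. -/
open scoped Classical

/-- Ordered adjacent pair count with class constraints. -/
noncomputable def pairCount {V : Type*} [Fintype V] (G : SimpleGraph V)
    (σ : V → Fin 3) (a b : Fin 3) : ℕ :=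
  (Finset.univ.filter (fun p : V × V => G.Adj p.1 p.2 ∧ σ p.1 = a ∧ σ p.2 = b)).card

/-- `|S_1| - |S_2| - (2E_{S_1} + E_{S_1,S_3})/(τ-1)` for the partition `σ`
(classes `0,1,2` encode `S_1,S_2,S_3`). -/
noncomputable def Bobj {V : Type*} [Fintype V] (G : SimpleGraph V) (τ : ℝ)
    (σ : V → Fin 3) : ℝ :=
  ((Finset.univ.filter (fun v => σ v = 0)).card : ℝ)
    - ((Finset.univ.filter (fun v => σ v = 1)).card : ℝ)
    - ((pairCount G σ 0 0 : ℝ) + (pairCount G σ 0 2 : ℝ)) / (τ - 1)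

theorem optimal_partition_S1_low_degree
    {V : Type*} [Fintype V] (G : SimpleGraph V)
    (τ : ℝ) (hτ2 : 2 < τ) (hτ3 : τ < 3)
    (σ : V → Fin 3) (hS2 : ∀ v, σ v ≠ 1)
    (hopt : ∀ σ' : V → Fin 3, Bobj G τ σ' ≤ Bobj G τ σ) :
    ∀ v, σ v = 0 →
      (Finset.univ.filter (fun u => G.Adj v u ∧ σ u = 0)).card
        + (Finset.univ.filter (fun u => G.Adj v u ∧ σ u = 2)).card ≤ 1 := by
  intro v hv
  set σ' : V → Fin 3 := Function.update σ v 2 with hσ'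
  set d1 := (Finset.univ.filter (fun u => G.Adj v u ∧ σ u = 0)).card with hd1
  set d3 := (Finset.univ.filter (fun u => G.Adj v u ∧ σ u = 2)).card with hd3
  have pcsum : ∀ (ρ : V → Fin 3) (a b : Fin 3), pairCount G ρ a b
      = ∑ x : V, ∑ y : V, if (G.Adj x y ∧ ρ x = a ∧ ρ y = b) then 1 else 0 := by
    intro ρ a b
    rw [pairCount, Finset.card_filter, Fintype.sum_prod_type]
  -- pointwise identity
  have hpt : ∀ x y : V,
      ((if (G.Adj x y ∧ σ x = 0 ∧ σ y = 0) then 1 else 0)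
        + (if (G.Adj x y ∧ σ x = 0 ∧ σ y = 2) then 1 else 0))
      = (((if (G.Adj x y ∧ σ' x = 0 ∧ σ' y = 0) then 1 else 0)
        + (if (G.Adj x y ∧ σ' x = 0 ∧ σ' y = 2) then 1 else 0))
        + (if x = v then ((if (G.Adj v y ∧ σ y = 0) then 1 else 0)
            + (if (G.Adj v y ∧ σ y = 2) then 1 else 0)) else 0)) := by
    intro x y
    by_cases hx : x = v
    · by_cases hy : y = v
      · simp [hx, hy, SimpleGraph.irrefl]
      · simp [hx, hσ', Function.update_self, Function.update_of_ne hy, hv]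
    · by_cases hy : y = v
      · simp only [hy, hσ', Function.update_self, Function.update_of_ne hx, hv, hx, if_false,
          if_neg hx]
        by_cases ha : G.Adj x v ∧ σ x = 0
        · simp [ha]
        · simp [ha]
      · simp [hσ', Function.update_of_ne hx, Function.update_of_ne hy, hx]
  have main : (∑ x : V, ∑ y : V, ((if (G.Adj x y ∧ σ x = 0 ∧ σ y = 0) then 1 else 0)
        + (if (G.Adj x y ∧ σ x = 0 ∧ σ y = 2) then 1 else 0)))
      = (∑ x : V, ∑ y : V, ((if (G.Adj x y ∧ σ' x = 0 ∧ σ' y = 0) then 1 else 0)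
        + (if (G.Adj x y ∧ σ' x = 0 ∧ σ' y = 2) then 1 else 0)))
        + (∑ y : V, ((if (G.Adj v y ∧ σ y = 0) then 1 else 0)
            + (if (G.Adj v y ∧ σ y = 2) then 1 else 0))) := by
    have step : ∀ x : V, (∑ y : V, ((if (G.Adj x y ∧ σ x = 0 ∧ σ y = 0) then 1 else 0)
        + (if (G.Adj x y ∧ σ x = 0 ∧ σ y = 2) then 1 else 0)))
        = (∑ y : V, ((if (G.Adj x y ∧ σ' x = 0 ∧ σ' y = 0) then 1 else 0)
          + (if (G.Adj x y ∧ σ' x = 0 ∧ σ' y = 2) then 1 else 0)))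
        + (if x = v then (∑ y : V, ((if (G.Adj v y ∧ σ y = 0) then 1 else 0)
            + (if (G.Adj v y ∧ σ y = 2) then 1 else 0))) else 0) := by
      intro x
      rw [Finset.sum_congr rfl (fun y _ => hpt x y), Finset.sum_add_distrib]
      congr 1
      split_ifs <;> simp
    rw [Finset.sum_congr rfl (fun x _ => step x), Finset.sum_add_distrib,
      Finset.sum_ite_eq' Finset.univ v, if_pos (Finset.mem_univ v)]
  have key : pairCount G σ 0 0 + pairCount G σ 0 2
      = (pairCount G σ' 0 0 + pairCount G σ' 0 2) + (d1 + d3) := by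
    have hd : d1 + d3 = (∑ y : V, if (G.Adj v y ∧ σ y = 0) then 1 else 0)
        + (∑ y : V, if (G.Adj v y ∧ σ y = 2) then 1 else 0) := by
      rw [hd1, hd3, Finset.card_filter, Finset.card_filter]
    rw [pcsum, pcsum, pcsum, pcsum, hd]
    simp only [Finset.sum_add_distrib] at main
    exact main
  -- class cardinalities
  have hmem : v ∈ Finset.univ.filter (fun u => σ u = 0) := by simp [hv]
  have h0 : Finset.univ.filter (fun u => σ' u = 0)
      = (Finset.univ.filter (fun u => σ u = 0)).erase v := by
    ext u
    by_cases hu : u = v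
    · simp [hu, hσ']
    · simp [hσ', Function.update_of_ne hu, hu]
  have hc0 : ((Finset.univ.filter (fun u => σ' u = 0)).card : ℝ)
      = ((Finset.univ.filter (fun u => σ u = 0)).card : ℝ) - 1 := by
    rw [h0, Finset.card_erase_of_mem hmem,
      Nat.cast_sub (Finset.card_pos.mpr ⟨v, hmem⟩), Nat.cast_one]
  have hc1 : Finset.univ.filter (fun u => σ u = 1) = ∅ := by
    simp only [Finset.filter_eq_empty_iff]
    intro u _; exact hS2 u
  have hc1' : Finset.univ.filter (fun u => σ' u = 1) = ∅ := by
    simp only [Finset.filter_eq_empty_iff]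
    intro u _
    by_cases hu : u = v
    · simp [hu, hσ']
    · simp [hσ', Function.update_of_ne hu]; exact hS2 u
  -- assemble
  have h := hopt σ'
  rw [Bobj, Bobj, hc1, hc1', hc0] at h
  have hkey : (pairCount G σ 0 0 : ℝ) + (pairCount G σ 0 2 : ℝ)
      = ((pairCount G σ' 0 0 : ℝ) + (pairCount G σ' 0 2 : ℝ)) + ((d1 : ℝ) + (d3 : ℝ)) := by
    exact_mod_cast congrArg (Nat.cast : ℕ → ℝ) key
  rw [hkey, add_div ((pairCount G σ' 0 0 : ℝ) + (pairCount G σ' 0 2 : ℝ))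
    ((d1 : ℝ) + (d3 : ℝ))] at h
  have hτ : (0:ℝ) < τ - 1 := by linarith
  have hdle : ((d1 : ℝ) + (d3 : ℝ)) / (τ - 1) ≤ 1 := by
    simp only [Finset.card_empty, Nat.cast_zero] at h
    linarith
  have hd2 : ((d1 : ℝ) + (d3 : ℝ)) ≤ τ - 1 := (div_le_one hτ).mp hdle
  have hlt : (d1 : ℝ) + (d3 : ℝ) < 2 := by linarith
  have : d1 + d3 < 2 := by exact_mod_cast hlt
  omega
end

section
/- For τ ∈ (2,3), the exponent of the expected number of bow-ties (two triangles sharing one vertex) satisfies: max over partitions of the bow-tie vertex set of the free-variation objective yields exponent max(5(3-τ)/2, 4-τ); moreover 5(3-τ)/2 > 4-τ if and only if τ < 7/3. -/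
open scoped Classical

/-- The bow-tie: two triangles `{0,1,2}` and `{0,3,4}` sharing the vertex `0`. -/
def bowtie : SimpleGraph (Fin 5) :=
  SimpleGraph.fromRel (fun u v =>
    (u = 0 ∧ v = 1) ∨ (u = 0 ∧ v = 2) ∨ (u = 1 ∧ v = 2) ∨
    (u = 0 ∧ v = 3) ∨ (u = 0 ∧ v = 4) ∨ (u = 3 ∧ v = 4))

instance bowtieAdjDec : DecidableRel bowtie.Adj := fun u v =>
  decidable_of_iff _ (SimpleGraph.fromRel_adj _ u v).symm

/-- Computable version of `pairCount` for the bow-tie. -/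
def cnt (σ : Fin 5 → Fin 3) (a b : Fin 3) : ℕ :=
  (Finset.univ.filter (fun p : Fin 5 × Fin 5 =>
    bowtie.Adj p.1 p.2 ∧ σ p.1 = a ∧ σ p.2 = b)).card

/-- Number of vertices in class `a`. -/
def nv (σ : Fin 5 → Fin 3) (a : Fin 3) : ℕ :=
  (Finset.univ.filter (fun v => σ v = a)).card

lemma pairCount_eq (σ : Fin 5 → Fin 3) (a b : Fin 3) :
    pairCount bowtie σ a b = cnt σ a b := by
  unfold pairCount cnt
  rw [Finset.filter_congr_decidable]

lemma nv_eq (σ : Fin 5 → Fin 3) (a : Fin 3) :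
    (Finset.univ.filter (fun v => σ v = a)).card = nv σ a := by
  unfold nv
  rw [Finset.filter_congr_decidable]

set_option maxRecDepth 10000 in
lemma key : ∀ σ : Fin 5 → Fin 3,
    4 * nv σ 0 ≤ 3 * (cnt σ 0 0 + cnt σ 0 2) + 4 * nv σ 1 ∧
    2 * nv σ 0 ≤ (cnt σ 0 0 + cnt σ 0 2) + 2 + 2 * nv σ 1 := by decide

lemma Bobj_eq (τ : ℝ) (σ : Fin 5 → Fin 3) :
    Bobj bowtie τ σ = (nv σ 0 : ℝ) - (nv σ 1 : ℝ)
      - ((cnt σ 0 0 : ℝ) + (cnt σ 0 2 : ℝ)) / (τ - 1) := by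
  unfold Bobj
  rw [pairCount_eq, pairCount_eq, nv_eq, nv_eq]

theorem bowtie_free_variation_exponent
    (τ : ℝ) (hτ2 : 2 < τ) (hτ3 : τ < 3) :
    (⨆ σ : Fin 5 → Fin 3, ((3 - τ) / 2 * 5 + ((τ - 1) / 2) * Bobj bowtie τ σ))
        = max (5 * (3 - τ) / 2) (4 - τ) ∧
    (5 * (3 - τ) / 2 > 4 - τ ↔ τ < 7/3) := by
  have hτ1 : τ - 1 ≠ 0 := by linarith
  set f : (Fin 5 → Fin 3) → ℝ :=
    fun σ => (3 - τ) / 2 * 5 + ((τ - 1) / 2) * Bobj bowtie τ σ with hf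
  have hval : ∀ σ, f σ = 5 * (3 - τ) / 2
      + ((τ - 1) * ((nv σ 0 : ℝ) - (nv σ 1 : ℝ)) - ((cnt σ 0 0 : ℝ) + (cnt σ 0 2 : ℝ))) / 2 := by
    intro σ
    rw [hf]
    simp only [Bobj_eq]
    field_simp
  constructor
  · apply le_antisymm
    · apply ciSup_le
      intro σ
      obtain ⟨h1, h2⟩ := key σ
      have h1' : 4 * (nv σ 0 : ℝ) ≤ 3 * ((cnt σ 0 0 : ℝ) + (cnt σ 0 2 : ℝ)) + 4 * (nv σ 1 : ℝ) := by
        exact_mod_cast h1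
      have h2' : 2 * (nv σ 0 : ℝ) ≤ ((cnt σ 0 0 : ℝ) + (cnt σ 0 2 : ℝ)) + 2 + 2 * (nv σ 1 : ℝ) := by
        exact_mod_cast h2
      rw [hval σ]
      rcases le_total τ (7/3) with hc | hc
      · refine le_trans ?_ (le_max_left _ _)
        set d : ℝ := (nv σ 0 : ℝ) - (nv σ 1 : ℝ) with hd
        set e : ℝ := (cnt σ 0 0 : ℝ) + (cnt σ 0 2 : ℝ) with he
        have he0 : 0 ≤ e := by positivity
        rcases le_total d 0 with hds | hds
        · nlinarith [mul_nonpos_of_nonneg_of_nonpos (by linarith : (0:ℝ) ≤ τ - 1) hds]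
        · nlinarith [mul_nonneg (by linarith : (0:ℝ) ≤ 7/3 - τ) hds]
      · refine le_trans ?_ (le_max_right _ _)
        set d : ℝ := (nv σ 0 : ℝ) - (nv σ 1 : ℝ) with hd
        set e : ℝ := (cnt σ 0 0 : ℝ) + (cnt σ 0 2 : ℝ) with he
        nlinarith [mul_nonneg (by linarith : (0:ℝ) ≤ 3 - τ) (by linarith : (0:ℝ) ≤ 3*e + 4*((nv σ 1 : ℝ)) - 4*(nv σ 0 : ℝ)),
          mul_nonneg (by linarith : (0:ℝ) ≤ 3*τ - 7) (by linarith : (0:ℝ) ≤ e + 2 + 2*((nv σ 1 : ℝ)) - 2*(nv σ 0 : ℝ))]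
    · have hbdd : BddAbove (Set.range f) := (Set.finite_range f).bddAbove
      apply max_le
      · have h1 : f (fun _ => 2) = 5 * (3 - τ) / 2 := by
          rw [hval]
          have e1 : nv (fun _ => (2:Fin 3)) 0 = 0 := by decide
          have e2 : nv (fun _ => (2:Fin 3)) 1 = 0 := by decide
          have e3 : cnt (fun _ => (2:Fin 3)) 0 0 = 0 := by decide
          have e4 : cnt (fun _ => (2:Fin 3)) 0 2 = 0 := by decide
          rw [e1, e2, e3, e4]
          norm_num
        calc 5 * (3 - τ) / 2 = f (fun _ => 2) := h1.symm
          _ ≤ _ := le_ciSup hbdd _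
      · have h1 : f (fun v => if v = 0 then 1 else 0) = 4 - τ := by
          rw [hval]
          have e1 : nv (fun v => if v = 0 then 1 else 0) 0 = 4 := by decide
          have e2 : nv (fun v => if v = 0 then 1 else 0) 1 = 1 := by decide
          have e3 : cnt (fun v => if v = 0 then 1 else 0) 0 0 = 4 := by decide
          have e4 : cnt (fun v => if v = 0 then 1 else 0) 0 2 = 0 := by decide
          rw [e1, e2, e3, e4]
          norm_num
          ring
        calc 4 - τ = f (fun v => if v = 0 then 1 else 0) := h1.symm
          _ ≤ _ := le_ciSup hbdd _
  · constructor <;> intro h <;> linarith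
end

section
/- Let τ ∈ (2,3) and let (S_1,S_2,S_3) be an optimal partition for B_f(H) with S_2 = ∅ and S_1 ≠ ∅, for a connected graph H on k ≥ 3 vertices. Then every vertex of S_1 has degree exactly 1 in H and its unique neighbor lies in S_3. -/
open scoped Classical

lemma fin3cases : ∀ a : Fin 3, a ≠ 1 → a = 0 ∨ a = 2 := by decide

lemma pairCount_key {V : Type*} [Fintype V] (G : SimpleGraph V) [DecidableRel G.Adj]
    (σ : V → Fin 3) (h : ∀ v, σ v ≠ 1) :
    pairCount G σ 0 0 + pairCount G σ 0 2
      = ∑ x ∈ Finset.univ.filter (fun x => σ x = 0), G.degree x := by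
  unfold pairCount
  rw [Finset.card_filter, Finset.card_filter, Fintype.sum_prod_type, Fintype.sum_prod_type,
    ← Finset.sum_add_distrib, Finset.sum_filter]
  refine Finset.sum_congr rfl fun x _ => ?_
  rw [← Finset.sum_add_distrib]
  by_cases hx : σ x = 0
  · rw [if_pos hx, SimpleGraph.degree, SimpleGraph.neighborFinset_eq_filter, Finset.card_filter]
    refine Finset.sum_congr rfl fun y _ => ?_
    rcases fin3cases (σ y) (h y) with hy | hy <;> by_cases ha : G.Adj x y <;>
      simp [hx, hy, ha]
  · simp [hx]

theorem S1_vertices_are_pendant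
    (k : ℕ) (hk : 3 ≤ k) (G : SimpleGraph (Fin k)) [DecidableRel G.Adj]
    (hconn : G.Connected)
    (τ : ℝ) (hτ2 : 2 < τ) (hτ3 : τ < 3)
    (σ : Fin k → Fin 3) (hS2 : ∀ v, σ v ≠ 1) (hS1 : ∃ v, σ v = 0)
    (hopt : ∀ σ' : Fin k → Fin 3, Bobj G τ σ' ≤ Bobj G τ σ) :
    ∀ v, σ v = 0 → G.degree v = 1 ∧ ∀ u, G.Adj v u → σ u = 2 := by
  have hτ1 : (0:ℝ) < τ - 1 := by linarith
  have hB1 : (Finset.univ.filter (fun x => σ x = 1)).card = 0 := by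
    rw [Finset.card_eq_zero, Finset.filter_eq_empty_iff]
    exact fun x _ => hS2 x
  -- Step 1: every vertex of S1 has degree 1
  have hdeg : ∀ v, σ v = 0 → G.degree v = 1 := by
    intro v hv
    set σ' : Fin k → Fin 3 := Function.update σ v 2 with hσ'def
    have hne1 : ∀ x, σ' x ≠ 1 := by
      intro x
      by_cases hx : x = v
      · subst hx; simp [hσ'def]
      · rw [hσ'def, Function.update_of_ne hx]; exact hS2 x
    have hv0mem : v ∈ Finset.univ.filter (fun x => σ x = 0) := by simp [hv]
    have hs'0 : Finset.univ.filter (fun x => σ' x = 0)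
        = (Finset.univ.filter (fun x => σ x = 0)).erase v := by
      ext x
      by_cases hx : x = v
      · subst hx; simp [hσ'def]
      · simp [hσ'def, Function.update_of_ne hx, hx]
    have hs'1 : (Finset.univ.filter (fun x => σ' x = 1)).card = 0 := by
      rw [Finset.card_eq_zero, Finset.filter_eq_empty_iff]
      exact fun x _ => hne1 x
    have hone : 1 ≤ (Finset.univ.filter (fun x => σ x = 0)).card :=
      Finset.card_pos.mpr ⟨v, hv0mem⟩
    have hcard0 : ((Finset.univ.filter (fun x => σ' x = 0)).card : ℝ)
        = ((Finset.univ.filter (fun x => σ x = 0)).card : ℝ) - 1 := by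
      rw [hs'0, Finset.card_erase_of_mem hv0mem, Nat.cast_sub hone, Nat.cast_one]
    have hNN : (pairCount G σ' 0 0 + pairCount G σ' 0 2) + G.degree v
        = pairCount G σ 0 0 + pairCount G σ 0 2 := by
      rw [pairCount_key G σ hS2, pairCount_key G σ' hne1, hs'0]
      exact Finset.sum_erase_add _ _ hv0mem
    have hle := hopt σ'
    unfold Bobj at hle
    rw [hcard0, hs'1, hB1] at hle
    have hNNR : (pairCount G σ 0 0 : ℝ) + (pairCount G σ 0 2 : ℝ)
        = ((pairCount G σ' 0 0 : ℝ) + (pairCount G σ' 0 2 : ℝ)) + (G.degree v : ℝ) := by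
      exact_mod_cast hNN.symm
    rw [hNNR] at hle; simp only [add_div] at hle
    push_cast at hle
    have hdv : (G.degree v : ℝ) / (τ - 1) ≤ 1 := by linarith
    have hdv2 : (G.degree v : ℝ) ≤ τ - 1 := (div_le_one hτ1).mp hdv
    have hdlt : G.degree v < 2 := by
      by_contra hcon
      push_neg at hcon
      have : (2:ℝ) ≤ (G.degree v : ℝ) := by exact_mod_cast hcon
      linarith
    -- degree positive from connectivity
    have hpos : 0 < G.degree v := by
      rw [G.degree_pos_iff_exists_adj]
      have hcard : 1 < Fintype.card (Fin k) := by simp; omega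
      obtain ⟨w, hw⟩ := Fintype.exists_ne_of_one_lt_card hcard v
      obtain ⟨p⟩ := hconn.preconnected v w
      cases p with
      | nil => exact absurd rfl hw
      | cons h q => exact ⟨_, h⟩
    omega
  -- Step 2: neighbors lie in S3
  intro v hv
  refine ⟨hdeg v hv, ?_⟩
  intro u hadj
  rcases fin3cases (σ u) (hS2 u) with hu | hu
  · exfalso
    have huv : v ≠ u := hadj.ne
    have hdv := hdeg v hv
    have hdu := hdeg u hu
    have huniqv : ∀ w, G.Adj v w → w = u := by
      intro w hw
      have h1 : (G.neighborFinset v).card ≤ 1 := le_of_eq hdv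
      exact Finset.card_le_one.mp h1 w (G.mem_neighborFinset v w |>.mpr hw)
        u (G.mem_neighborFinset v u |>.mpr hadj)
    have huniqu : ∀ w, G.Adj u w → w = v := by
      intro w hw
      have h1 : (G.neighborFinset u).card ≤ 1 := le_of_eq hdu
      exact Finset.card_le_one.mp h1 w (G.mem_neighborFinset u w |>.mpr hw)
        v (G.mem_neighborFinset u v |>.mpr hadj.symm)
    have hclosed : ∀ x y : Fin k, G.Walk x y → (x = v ∨ x = u) → (y = v ∨ y = u) := by
      intro x y p
      induction p with
      | nil => exact id
      | cons hab p ih =>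
        intro hx
        apply ih
        rcases hx with rfl | rfl
        · right; exact huniqv _ hab
        · left; exact huniqu _ hab
    have hex : ∃ w : Fin k, w ≠ v ∧ w ≠ u := by
      by_contra hcon
      push_neg at hcon
      have hsub : (Finset.univ : Finset (Fin k)) ⊆ {v, u} := by
        intro w _
        rcases eq_or_ne w v with rfl | hwv
        · simp
        · simp [hcon w hwv]
      have := Finset.card_le_card hsub
      have h2 : ({v, u} : Finset (Fin k)).card ≤ 2 := Finset.card_insert_le _ _ |>.trans (by simp)
      simp at this
      omega
    obtain ⟨w, hwv, hwu⟩ := hex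
    obtain ⟨p⟩ := hconn.preconnected v w
    rcases hclosed v w p (Or.inl rfl) with rfl | rfl
    · exact hwv rfl
    · exact hwu rfl
  · exact hu
end

section
/- Let τ ∈ (2,3). For the typical (constrained) variational problem of the claw K_{1,3}, the maximum of (1-τ)∑_i α_i + ∑_{(i,j)∈E, α_i+α_j<1}(α_i+α_j-1) over α ∈ [0, 1/(τ-1)]^4 is attained at α_center = 1/(τ-1), α_leaf = 0 for all three leaves, with value (1-τ)/(τ-1)·1 + 3·(1/(τ-1) - 1) = -1 + 3(2-τ)/(τ-1); consequently the typical claw-count exponent equals 4 + this value = 3/(τ-1). -/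
open scoped Classical

/-- The claw `K_{1,3}`: star on `Fin 4` with center `0` and leaves `1,2,3`. -/
def claw : SimpleGraph (Fin 4) := SimpleGraph.fromRel (fun u _ => u = 0)

lemma fobj_claw (τ : ℝ) (α : Fin 4 → ℝ) :
    fobj claw τ α = (1 - τ) * (α 0 + α 1 + α 2 + α 3) +
      ((if α 0 + α 1 < 1 then α 0 + α 1 - 1 else 0) +
       (if α 0 + α 2 < 1 then α 0 + α 2 - 1 else 0) +
       (if α 0 + α 3 < 1 then α 0 + α 3 - 1 else 0) +
       (if α 1 + α 0 < 1 then α 1 + α 0 - 1 else 0) +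
       (if α 2 + α 0 < 1 then α 2 + α 0 - 1 else 0) +
       (if α 3 + α 0 < 1 then α 3 + α 0 - 1 else 0)) / 2 := by
  unfold fobj
  rw [Finset.sum_filter, Fintype.sum_prod_type]
  simp only [Fin.sum_univ_four]
  simp only [claw, SimpleGraph.fromRel_adj, Fin.reduceEq, ne_eq, not_false_iff, not_true,
    false_and, and_false, true_and, and_true, false_or, or_false, if_false, true_or, or_true,
    if_true, not_true_eq_false, not_false_eq_true]
  ring

theorem claw_typical_variation
    (τ : ℝ) (hτ2 : 2 < τ) (hτ3 : τ < 3) :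
    (∀ α : Fin 4 → ℝ, (∀ i, 0 ≤ α i ∧ α i ≤ 1 / (τ - 1)) →
        fobj claw τ α ≤ fobj claw τ (fun i => if i = 0 then 1 / (τ - 1) else 0)) ∧
    fobj claw τ (fun i => if i = 0 then 1 / (τ - 1) else 0) = 3 / (τ - 1) - 4 ∧
    (4 : ℝ) + (3 / (τ - 1) - 4) = 3 / (τ - 1) := by
  have hτ1 : (0:ℝ) < τ - 1 := by linarith
  have hne : τ - 1 ≠ 0 := ne_of_gt hτ1
  have hc2 : 1 / (τ - 1) < 1 := by
    rw [div_lt_one hτ1]; linarith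
  have hc1 : (1 / (τ - 1)) * (τ - 1) = 1 := by field_simp
  have hval : fobj claw τ (fun i => if i = 0 then 1 / (τ - 1) else 0) = 3 / (τ - 1) - 4 := by
    rw [fobj_claw]
    simp only [Fin.reduceEq, if_false, if_true, ite_true, ite_false, add_zero, zero_add]
    rw [if_pos hc2]
    field_simp
    ring
  refine ⟨?_, hval, by field_simp; ring⟩
  intro α hα
  rw [hval, fobj_claw]
  rw [add_comm (α 1) (α 0), add_comm (α 2) (α 0), add_comm (α 3) (α 0)]
  obtain ⟨h0a, h0b⟩ := hα 0
  obtain ⟨h1a, h1b⟩ := hα 1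
  obtain ⟨h2a, h2b⟩ := hα 2
  obtain ⟨h3a, h3b⟩ := hα 3
  have ht2 : (0:ℝ) ≤ τ - 2 := by linarith
  have ht4 : (0:ℝ) ≤ 4 - τ := by linarith
  have h3c : 3 / (τ - 1) - 4 = 3 * (1 / (τ - 1)) - 4 := by ring
  rw [h3c]
  generalize 1 / (τ - 1) = c at hc1 h0b h1b h2b h3b ⊢
  split_ifs with h1 h2 h3 <;>
    linarith [mul_nonneg ht2 h1a, mul_nonneg ht2 h2a, mul_nonneg ht2 h3a,
      mul_nonneg ht4 (sub_nonneg.mpr h0b), hc1]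
end
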